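/- Let ι : ℝ² \ {0} → ℝ² \ {0} denote inversion in the unit circle, ι(p) = p/‖p‖². Let U ⊆ ℝ² \ {0} be open and connected with ι(U) = U and U ∩ {p : ‖p‖ = 1} ≠ ∅. If u is harmonic on U and u(p) = 0 for every p ∈ U with ‖p‖ = 1, then u(p) = −u(ι(p)) for every p ∈ U. -/

import Mathlib

open Complex

/-- Partial derivative with respect to `x` (real part), identifying `ℝ²` with `ℂ`. -/
noncomputable def pdx (u : ℂ → ℝ) (z : ℂ) : ℝ :=
  deriv (fun t : ℝ => u ((t : ℂ) + (z.im : ℂ) * Complex.I)) z.re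

/-- Partial derivative with respect to `y` (imaginary part), identifying `ℝ²` with `ℂ`. -/
noncomputable def pdy (u : ℂ → ℝ) (z : ℂ) : ℝ :=
  deriv (fun t : ℝ => u ((z.re : ℂ) + (t : ℂ) * Complex.I)) z.im

/-- Inversion in the unit circle, `ι(p) = p / ‖p‖²`. -/
noncomputable def circleInv (z : ℂ) : ℂ := z / ((‖z‖ : ℂ)) ^ 2

/-!
Near a point `z₀` of the unit circle write `u = Re F` with `F` holomorphic. Since the
inversion `ι z = conj z⁻¹` is antiholomorphic, `ψ z = F z + conj (F (ι z))` is holomorphic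
near `z₀`, with real part `u + u ∘ ι`; on the circle `ι` is the identity, so there
`ψ = 2 Re F = 2 u = 0`. Circle points accumulate at `z₀`, so `ψ`, and with it `u + u ∘ ι`,
vanishes near `z₀`. Finally `u + u ∘ ι` is real-analytic on `U` (harmonic functions are
real-analytic), so the identity theorem on the connected set `U` makes it vanish everywhere.
-/

open Filter Topology Metric InnerProductSpace Laplacian ComplexConjugate

theorem frequently_mem_sphere_nhdsNE {E : Type*} [NormedAddCommGroup E] [NormedSpace ℝ E]
    (hE : 1 < Module.rank ℝ E) {c x : E} {r : ℝ} (hr : 0 < r) (hx : x ∈ sphere c r) :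
    ∃ᶠ y in 𝓝[≠] x, y ∈ sphere c r := by
  set y := c - (x - c)
  have hy : y ∈ sphere c r := by simpa [y, dist_eq_norm, norm_sub_rev] using hx
  have hxy : dist x y = 2 * r := by
    rw [dist_eq_norm, show x - y = (2 : ℝ) • (x - c) by simp only [y, two_smul]; abel,
      norm_smul, ← dist_eq_norm, mem_sphere.1 hx, Real.norm_two]
  have hne : x ≠ y := dist_pos.1 (by rw [hxy]; positivity)
  exact accPt_iff_frequently_nhdsNE.1 <|
    (isPreconnected_sphere hE c r).preperfect_of_nontrivial ⟨x, hx, y, hy, hne⟩ x hx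

section PartialDerivatives

variable {u v : ℂ → ℝ} {z : ℂ}

theorem pdx_eq_fderiv (h : DifferentiableAt ℝ u z) : pdx u z = fderiv ℝ u z 1 := by
  have hline : HasDerivAt (fun t : ℝ => (t : ℂ) + (z.im : ℂ) * I) 1 z.re := by
    simpa using (ofRealCLM.hasDerivAt (x := z.re)).add_const ((z.im : ℂ) * I)
  have hu : HasFDerivAt u (fderiv ℝ u z) ((z.re : ℂ) + (z.im : ℂ) * I) := by
    simpa [re_add_im] using h.hasFDerivAt
  exact (hu.comp_hasDerivAt z.re hline).deriv

theorem pdy_eq_fderiv (h : DifferentiableAt ℝ u z) : pdy u z = fderiv ℝ u z I := by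
  have hline : HasDerivAt (fun t : ℝ => (z.re : ℂ) + (t : ℂ) * I) I z.im := by
    simpa using ((ofRealCLM.hasDerivAt (x := z.im)).mul_const I).const_add (z.re : ℂ)
  have hu : HasFDerivAt u (fderiv ℝ u z) ((z.re : ℂ) + (z.im : ℂ) * I) := by
    simpa [re_add_im] using h.hasFDerivAt
  exact (hu.comp_hasDerivAt z.im hline).deriv

theorem Filter.EventuallyEq.pdx_eq (h : u =ᶠ[𝓝 z] v) : pdx u z = pdx v z := by
  have hline : Tendsto (fun t : ℝ => (t : ℂ) + (z.im : ℂ) * I) (𝓝 z.re) (𝓝 z) := by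
    simpa [re_add_im] using
      (by fun_prop : Continuous fun t : ℝ => (t : ℂ) + (z.im : ℂ) * I).tendsto z.re
  exact (h.comp_tendsto hline).deriv_eq

theorem Filter.EventuallyEq.pdy_eq (h : u =ᶠ[𝓝 z] v) : pdy u z = pdy v z := by
  have hline : Tendsto (fun t : ℝ => (z.re : ℂ) + (t : ℂ) * I) (𝓝 z.im) (𝓝 z) := by
    simpa [re_add_im] using
      (by fun_prop : Continuous fun t : ℝ => (z.re : ℂ) + (t : ℂ) * I).tendsto z.im
  exact (h.comp_tendsto hline).deriv_eq

theorem ContDiffAt.pdx_pdx_eq (h : ContDiffAt ℝ 2 u z) :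
    pdx (pdx u) z = fderiv ℝ (fderiv ℝ u) z 1 1 := by
  have hev : pdx u =ᶠ[𝓝 z] fun y => fderiv ℝ u y 1 :=
    (h.eventually (by simp)).mono fun y hy => pdx_eq_fderiv (hy.differentiableAt two_ne_zero)
  have hd : DifferentiableAt ℝ (fderiv ℝ u) z :=
    (h.fderiv_right (m := 1) (by norm_num)).differentiableAt one_ne_zero
  rw [hev.pdx_eq, pdx_eq_fderiv (hd.clm_apply (differentiableAt_const _)),
    fderiv_clm_apply hd (differentiableAt_const _)]
  simp

theorem ContDiffAt.pdy_pdy_eq (h : ContDiffAt ℝ 2 u z) :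
    pdy (pdy u) z = fderiv ℝ (fderiv ℝ u) z I I := by
  have hev : pdy u =ᶠ[𝓝 z] fun y => fderiv ℝ u y I :=
    (h.eventually (by simp)).mono fun y hy => pdy_eq_fderiv (hy.differentiableAt two_ne_zero)
  have hd : DifferentiableAt ℝ (fderiv ℝ u) z :=
    (h.fderiv_right (m := 1) (by norm_num)).differentiableAt one_ne_zero
  rw [hev.pdy_eq, pdy_eq_fderiv (hd.clm_apply (differentiableAt_const _)),
    fderiv_clm_apply hd (differentiableAt_const _)]
  simp

theorem ContDiffAt.pdx_pdx_add_pdy_pdy (h : ContDiffAt ℝ 2 u z) :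
    pdx (pdx u) z + pdy (pdy u) z = Δ u z := by
  simp [h.pdx_pdx_eq, h.pdy_pdy_eq, laplacian_eq_iteratedFDeriv_complexPlane,
    iteratedFDeriv_two_apply]

end PartialDerivatives

theorem harmonicOnNhd_of_pdx_pdy {u : ℂ → ℝ} {U : Set ℂ} (hU : IsOpen U)
    (hu : ContDiffOn ℝ 2 u U) (h : ∀ z ∈ U, pdx (pdx u) z + pdy (pdy u) z = 0) :
    HarmonicOnNhd u U := by
  intro z hz
  refine ⟨hu.contDiffAt (hU.mem_nhds hz), ?_⟩
  filter_upwards [hU.mem_nhds hz] with y hy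
  rw [← (hu.contDiffAt (hU.mem_nhds hy)).pdx_pdx_add_pdy_pdy, h y hy, Pi.zero_apply]

theorem circleInv_eq_conj_inv (z : ℂ) : circleInv z = conj z⁻¹ := by
  rw [circleInv, map_inv₀, inv_def, conj_conj, normSq_conj, normSq_eq_norm_sq, div_eq_mul_inv]
  push_cast; rfl

theorem circleInv_of_norm_eq_one {z : ℂ} (hz : ‖z‖ = 1) : circleInv z = z := by
  simp [circleInv, hz]

theorem analyticAt_circleInv {z : ℂ} (hz : z ≠ 0) : AnalyticAt ℝ circleInv z := by
  rw [show circleInv = fun w => conj w⁻¹ from funext circleInv_eq_conj_inv]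
  exact conjCLE.analyticAt _ |>.comp (analyticAt_inv hz)

theorem AnalyticAt.conj_comp_circleInv {F : ℂ → ℂ} {z : ℂ} (hz : z ≠ 0)
    (hF : AnalyticAt ℂ F (circleInv z)) : AnalyticAt ℂ (fun w => conj (F (circleInv w))) z := by
  rw [analyticAt_iff_eventually_differentiableAt] at hF ⊢
  filter_upwards [(analyticAt_circleInv hz).continuousAt.eventually hF,
    isOpen_ne.mem_nhds hz] with w hw hw0
  have hconj : DifferentiableAt ℂ (conj ∘ F ∘ conj) w⁻¹ := by
    simpa [circleInv_eq_conj_inv] using hw.conj_conj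
  simpa [Function.comp_def, circleInv_eq_conj_inv] using hconj.comp w (differentiableAt_inv hw0)

theorem InnerProductSpace.HarmonicAt.exists_analyticAt_re_eq {u : ℂ → ℝ} {z : ℂ}
    (h : HarmonicAt u z) :
    ∃ F : ℂ → ℂ, AnalyticAt ℂ F z ∧ ∀ᶠ w in 𝓝 z, (F w).re = u w := by
  obtain ⟨ε, hε, hball⟩ := isOpen_iff.1 (isOpen_setOfPred_harmonicAt u) z h
  obtain ⟨F, hF, hre⟩ := HarmonicOnNhd.exists_analyticOnNhd_ball_re_eq fun _ hy => hball hy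
  exact ⟨F, hF z (mem_ball_self hε), eventually_of_mem (ball_mem_nhds z hε) hre⟩

theorem InnerProductSpace.HarmonicAt.eventually_add_comp_circleInv_eq_zero {u : ℂ → ℝ}
    {z₀ : ℂ} (hz₀ : ‖z₀‖ = 1) (hu : HarmonicAt u z₀)
    (hzero : ∀ᶠ z in 𝓝 z₀, ‖z‖ = 1 → u z = 0) :
    ∀ᶠ z in 𝓝 z₀, u z + u (circleInv z) = 0 := by
  obtain ⟨F, hF, hre⟩ := hu.exists_analyticAt_re_eq
  have hz₀0 : z₀ ≠ 0 := norm_ne_zero_iff.1 (by simp [hz₀])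
  have hfix := circleInv_of_norm_eq_one hz₀
  have hι : Tendsto circleInv (𝓝 z₀) (𝓝 z₀) := by
    simpa only [hfix] using (analyticAt_circleInv hz₀0).continuousAt.tendsto
  set ψ : ℂ → ℂ := fun w => F w + conj (F (circleInv w))
  have hψ : AnalyticAt ℂ ψ z₀ := hF.add (.conj_comp_circleInv hz₀0 (by rwa [hfix]))
  have hcirc : ∃ᶠ w in 𝓝[≠] z₀, ‖w‖ = 1 := by
    simpa using
      frequently_mem_sphere_nhdsNE (E := ℂ) (c := 0) (by simp) one_pos (by simpa using hz₀)
  have hψ0 : ∃ᶠ w in 𝓝[≠] z₀, ψ w = 0 := by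
    refine (hcirc.and_eventually (nhdsWithin_le_nhds (hre.and hzero))).mono ?_
    rintro w ⟨hw, hreF, hu0⟩
    simp [ψ, circleInv_of_norm_eq_one hw, add_conj, hreF, hu0 hw]
  filter_upwards [hψ.frequently_zero_iff_eventually_zero.1 hψ0, hre, hι.eventually hre]
    with w hw h1 h2
  simpa [ψ, ← h1, ← h2] using congrArg re hw

/-- Schwarz reflection principle across the unit circle. -/
theorem schwarz_reflection_circle
    (U : Set ℂ) (hU0 : U ⊆ {z : ℂ | z ≠ 0}) (hUopen : IsOpen U)
    (hUconn : IsConnected U) (hUsym : circleInv '' U = U)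
    (hUcirc : ∃ z ∈ U, ‖z‖ = 1)
    (u : ℂ → ℝ) (hu : ContDiffOn ℝ 2 u U)
    (hharm : ∀ z ∈ U, pdx (pdx u) z + pdy (pdy u) z = 0)
    (hzero : ∀ z ∈ U, ‖z‖ = 1 → u z = 0) :
    ∀ z ∈ U, u z = -u (circleInv z) := by
  have hU : HarmonicOnNhd u U := harmonicOnNhd_of_pdx_pdy hUopen hu hharm
  have hιU : ∀ z ∈ U, circleInv z ∈ U := fun z hz => hUsym ▸ Set.mem_image_of_mem _ hz
  have hv : AnalyticOnNhd ℝ (fun z => u z + u (circleInv z)) U := fun z hz =>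
    (HarmonicAt.analyticAt (hU z hz)).add <|
      (HarmonicAt.analyticAt (hU _ (hιU z hz))).fun_comp (analyticAt_circleInv (hU0 hz))
  obtain ⟨z₀, hz₀U, hz₀⟩ := hUcirc
  have hv₀ : (fun z => u z + u (circleInv z)) =ᶠ[𝓝 z₀] 0 :=
    (hU z₀ hz₀U).eventually_add_comp_circleInv_eq_zero hz₀ <|
      eventually_of_mem (hUopen.mem_nhds hz₀U) hzero
  intro z hz
  have := hv.eqOn_zero_of_preconnected_of_eventuallyEq_zero hUconn.isPreconnected hz₀U hv₀ hz
  simp only [Pi.zero_apply] at this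
  linarith
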